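/- arXiv:2302.02393 — 13 statements merged into one kernel-verified Lean document; each statement's English description precedes it below -/
import Mathlib

section
/- Let R be a ring, σ an endomorphism of R, and M a right R-module. If M is rigid (i.e., for all m ∈ M, a ∈ R, m·a² = 0 implies m·a = 0) and M satisfies condition (C₂) (i.e., m·σ(a) = 0 implies m·a = 0), then M is σ-rigid (i.e., m·a·σ(a) = 0 implies m·a = 0). -/
open MulOpposite

/-- If `M` is a rigid right `R`-module satisfying condition (C₂) with respect to the
ring endomorphism `σ`, then `M` is `σ`-rigid. -/
theorem rigid_C2_imp_sigma_rigid {R M : Type*} [Ring R] [AddCommGroup M] [Module Rᵐᵒᵖ M]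
    (σ : R →+* R)
    (hrigid : ∀ (m : M) (a : R), op a • (op a • m) = 0 → op a • m = 0)
    (hC2 : ∀ (m : M) (a : R), op (σ a) • m = 0 → op a • m = 0) :
    ∀ (m : M) (a : R), op (σ a) • (op a • m) = 0 → op a • m = 0 := by
  intro m a h
  exact hrigid m a (hC2 _ a h)
end

section
/- Let R be a ring and M a right R-module. If M is rigid (i.e., m·a² = 0 implies m·a = 0 for all m ∈ M, a ∈ R), then M is abelian, i.e., for every idempotent e ∈ R, every r ∈ R, and every m ∈ M, m·e·r = m·r·e. -/
open MulOpposite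

/-- Every rigid right `R`-module is abelian. -/
theorem rigid_imp_abelian {R M : Type*} [Ring R] [AddCommGroup M] [Module Rᵐᵒᵖ M]
    (hrigid : ∀ (m : M) (a : R), op a • (op a • m) = 0 → op a • m = 0) :
    ∀ (e : R), e * e = e → ∀ (r : R) (m : M), op r • (op e • m) = op e • (op r • m) := by
  intro e he r m
  have h0 : (1 - e) * (e * r) = 0 := by
    rw [sub_mul, one_mul, ← mul_assoc, he, sub_self]
  have h0' : (r * e) * (1 - e) = 0 := by
    rw [mul_sub, mul_one, mul_assoc, he, sub_self]
  have ha : (e * r * (1 - e)) * (e * r * (1 - e)) = 0 := by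
    rw [mul_assoc (e * r), ← mul_assoc (1 - e), h0, zero_mul, mul_zero]
  have hb : ((1 - e) * (r * e)) * ((1 - e) * (r * e)) = 0 := by
    rw [mul_assoc, ← mul_assoc (r * e), h0', zero_mul, mul_zero]
  have ha' : e * r * (1 - e) = e * r - e * r * e := by rw [mul_sub, mul_one]
  have hb' : (1 - e) * (r * e) = r * e - e * r * e := by
    rw [sub_mul, one_mul, ← mul_assoc]
  rw [ha'] at ha
  rw [hb'] at hb
  have h1 : op (e * r - e * r * e) • m = 0 := by
    apply hrigid
    rw [smul_smul, ← op_mul, ha, op_zero, zero_smul]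
  have h2 : op (r * e - e * r * e) • m = 0 := by
    apply hrigid
    rw [smul_smul, ← op_mul, hb, op_zero, zero_smul]
  rw [op_sub, sub_smul, sub_eq_zero] at h1 h2
  calc op r • (op e • m) = op (e * r) • m := by rw [smul_smul, ← op_mul]
    _ = op (e * r * e) • m := h1
    _ = op (r * e) • m := h2.symm
    _ = op e • (op r • m) := by rw [smul_smul, ← op_mul]
end

section
/- Let R be a ring, σ an endomorphism of R, and M a right R-module. If M is σ-semicommutative, then M is abelian: for every idempotent e ∈ R, every r ∈ R and every m ∈ M, m·e·r = m·r·e. -/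
open MulOpposite

/-- Every `σ`-semicommutative right `R`-module is abelian. -/
theorem sigma_semicomm_imp_abelian {R M : Type*} [Ring R] [AddCommGroup M] [Module Rᵐᵒᵖ M]
    (σ : R →+* R)
    (hsc : ∀ (m : M) (a : R), op a • m = 0 → ∀ r : R, op (σ a) • (op r • m) = 0) :
    ∀ (e : R), e * e = e → ∀ (r : R) (m : M), op r • (op e • m) = op e • (op r • m) := by
  intro e he r m
  have key : ∀ (m : M) (r : R), op r • (op e • m) = op (σ e) • (op r • m) := by
    intro m r
    have h1 : op e • (m - op e • m) = 0 := by
      rw [smul_sub, smul_smul, ← op_mul, he, sub_self]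
    have h1' := hsc _ e h1 r
    have h2 : op (1 - e) • (op e • m) = 0 := by
      rw [smul_smul, ← op_mul, mul_sub, mul_one, he, sub_self, op_zero, zero_smul]
    have h2' := hsc _ (1 - e) h2 r
    rw [map_sub, map_one, op_sub, sub_smul, sub_eq_zero, op_one, one_smul] at h2'
    rw [smul_sub, smul_sub, sub_eq_zero] at h1'
    rw [h2', ← h1']
  have k1 : ∀ m : M, op e • m = op (σ e) • m := by
    intro m
    have := key m 1
    simpa using this
  rw [key m r, ← k1 (op r • m)]
end

section
/- Let R be a ring with no zero divisors, σ an endomorphism of R, M a right R-module, and N a prime submodule of M such that M/N is torsion-free. If both N and M/N are σ-rigid, then M is σ-rigid. -/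
open MulOpposite

/-- Let `R` be a ring with no zero divisors, `N` a prime submodule of a right `R`-module `M`
such that `M/N` is torsion-free. If `N` and `M/N` are `σ`-rigid, then `M` is `σ`-rigid. -/
theorem sigma_rigid_of_pieces {R M : Type*} [Ring R] [AddCommGroup M]
    [Module Rᵐᵒᵖ M] (σ : R →+* R)
    (hdom : ∀ a b : R, a * b = 0 → a = 0 ∨ b = 0)
    (N : Submodule Rᵐᵒᵖ M)
    (hprime : ∀ (m : M) (a : R), op a • m ∈ N → m ∈ N ∨ ∀ m' : M, op a • m' ∈ N)
    (htf : ∀ (x : M ⧸ N) (a : R), a ≠ 0 → x ≠ 0 → op a • x ≠ 0)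
    (hN : ∀ (m : M) (a : R), m ∈ N → op (σ a) • (op a • m) = 0 → op a • m = 0)
    (hQ : ∀ (x : M ⧸ N) (a : R), op (σ a) • (op a • x) = 0 → op a • x = 0) :
    ∀ (m : M) (a : R), op (σ a) • (op a • m) = 0 → op a • m = 0 := by
  intro m a h
  rcases eq_or_ne a 0 with rfl | ha
  · simp
  have hq : op a • (Submodule.Quotient.mk m : M ⧸ N) = 0 := by
    apply hQ _ a
    rw [← Submodule.Quotient.mk_smul, ← Submodule.Quotient.mk_smul, h]
    simp
  have ham : op a • m ∈ N := by
    rwa [← Submodule.Quotient.mk_smul, Submodule.Quotient.mk_eq_zero] at hq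
  rcases hprime m a ham with hm | hall
  · exact hN m a hm h
  · -- a • everything ∈ N, torsion-freeness forces N = ⊤, so m ∈ N
    have hm : m ∈ N := by
      by_contra hm
      have hx : (Submodule.Quotient.mk m : M ⧸ N) ≠ 0 := by
        rwa [ne_eq, Submodule.Quotient.mk_eq_zero]
      exact htf _ a ha hx hq
    exact hN m a hm h
end

section
/- Let n ≥ 2 and let V_n(M) = M[x]/M[x](x^n) be the right V_n(R) = R[x]/(x^n)-module of truncated polynomial classes, with σ extended to σ̄ on V_n(R) by acting coefficientwise. If V_n(M) is σ̄-semicommutative as a right V_n(R)-module, then M is σ-semicommutative as a right R-module. -/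
open MulOpposite Finset

theorem sum_antidiagonal_smul_single {R M : Type*} [Semiring R] [AddCommMonoid M]
    [Module Rᵐᵒᵖ M] (a : R) (m : M) (k : ℕ) :
    ∑ ij ∈ antidiagonal k, op ((Pi.single 0 a : ℕ → R) ij.2) • (Pi.single 0 m : ℕ → M) ij.1 =
      (Pi.single 0 (op a • m) : ℕ → M) k := by
  rw [sum_eq_single (0, k)]
  · rcases eq_or_ne k 0 with rfl | hk
    · simp
    · simp [hk]
  · rintro ⟨i, j⟩ hij hne
    have hi : i ≠ 0 := by
      rintro rfl
      exact hne (by simpa using hij)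
    simp [hi]
  · simp

/-- If the truncated polynomial module `Vₙ(M) = M[x]/M[x](xⁿ)` (whose elements are tuples
`(m₀,…,m_{n-1})` with convolution scalar action truncated at degree `n-1`) is
`σ̄`-semicommutative as a right `Vₙ(R) = R[x]/(xⁿ)`-module, then `M` is `σ`-semicommutative. -/
theorem sigma_semicomm_of_Vn {R M : Type*} [Ring R] [AddCommGroup M] [Module Rᵐᵒᵖ M]
    (σ : R →+* R) (n : ℕ) (hn : 2 ≤ n)
    (hVn : ∀ (U : ℕ → M) (A : ℕ → R),
        (∀ k < n, ∑ ij ∈ antidiagonal k, op (A ij.2) • U ij.1 = 0) →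
        ∀ (B : ℕ → R), ∀ k < n,
          ∑ ij ∈ antidiagonal k,
            op (σ (A ij.2)) • (∑ pq ∈ antidiagonal ij.1, op (B pq.2) • U pq.1) = 0) :
    ∀ (m : M) (a : R), op a • m = 0 → ∀ r : R, op (σ a) • (op r • m) = 0 := by
  intro m a ha r
  have hma : ∀ k < n, ∑ ij ∈ antidiagonal k,
      op ((Pi.single 0 a : ℕ → R) ij.2) • (Pi.single 0 m : ℕ → M) ij.1 = 0 := by
    intro k _
    simp [sum_antidiagonal_smul_single, ha]
  simpa using hVn (Pi.single 0 m) (Pi.single 0 a) hma (Pi.single 0 r) 0 (by omega)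
end

section
/- Let n ≥ 2 and V_n(M), V_n(R) be the truncated polynomial module and ring as above. If V_n(M) is σ̄-rigid as a right V_n(R)-module, then M is σ-rigid as a right R-module. -/
open MulOpposite Finset

/- Feed the rigidity of `Vₙ(M)` the constant polynomials `m` and `a`: all their products vanish
in positive degree, so the hypothesis reduces to its degree-`0` coefficient, which is `m a σ(a)`. -/

/-- Multiplication by a constant polynomial acts coefficientwise. -/
theorem sum_antidiagonal_op_smul_eq_of_const {R M : Type*} [Ring R] [AddCommGroup M]
    [Module Rᵐᵒᵖ M] {A : ℕ → R} (hA : ∀ j ≠ 0, A j = 0) (U : ℕ → M) (k : ℕ) :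
    ∑ ij ∈ antidiagonal k, op (A ij.2) • U ij.1 = op (A 0) • U k := by
  refine (sum_eq_single_of_mem (k, 0) (mem_antidiagonal.2 (add_zero k)) ?_).trans rfl
  intro ij _ hne
  have hj : ij.2 ≠ 0 := fun h0 => hne (Prod.ext (by simp_all) h0)
  rw [hA _ hj, op_zero, zero_smul]

/-- If the truncated polynomial module `Vₙ(M) = M[x]/M[x](xⁿ)` is `σ̄`-rigid as a right
`Vₙ(R) = R[x]/(xⁿ)`-module, then `M` is `σ`-rigid. -/
theorem sigma_rigid_of_Vn {R M : Type*} [Ring R] [AddCommGroup M] [Module Rᵐᵒᵖ M]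
    (σ : R →+* R) (n : ℕ) (hn : 2 ≤ n)
    (hVn : ∀ (U : ℕ → M) (A : ℕ → R),
        (∀ k < n,
          ∑ ij ∈ antidiagonal k,
            op (σ (A ij.2)) • (∑ pq ∈ antidiagonal ij.1, op (A pq.2) • U pq.1) = 0) →
        ∀ k < n, ∑ ij ∈ antidiagonal k, op (A ij.2) • U ij.1 = 0) :
    ∀ (m : M) (a : R), op (σ a) • (op a • m) = 0 → op a • m = 0 := by
  intro m a h
  set A : ℕ → R := Pi.single 0 a
  set U : ℕ → M := Pi.single 0 m
  have hA : ∀ j ≠ 0, A j = 0 := fun j hj => by simp [A, hj]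
  have hσA : ∀ j ≠ 0, σ (A j) = 0 := fun j hj => by rw [hA j hj, map_zero]
  have hprod : ∀ k, ∑ ij ∈ antidiagonal k,
      op (σ (A ij.2)) • (∑ pq ∈ antidiagonal ij.1, op (A pq.2) • U pq.1) = 0 := by
    intro k
    simp_rw [sum_antidiagonal_op_smul_eq_of_const hA]
    refine (sum_antidiagonal_op_smul_eq_of_const hσA (fun i => op (A 0) • U i) k).trans ?_
    rcases eq_or_ne k 0 with rfl | hk
    · simpa [A, U] using h
    · simp [U, Pi.single_eq_of_ne hk]
  simpa [A, U, sum_antidiagonal_op_smul_eq_of_const hA] using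
    hVn U A (fun k _ => hprod k) 0 (by omega)
end

section
/- Let n ≥ 2, M a right R-module that is both σ-rigid and σ-semicommutative. Then V_n(M) = M[x]/M[x](x^n) is σ̄-semicommutative as a right V_n(R) = R[x]/(x^n)-module. -/
open MulOpposite Finset

/-- If `M` is a `σ`-rigid and `σ`-semicommutative right `R`-module, then the truncated
polynomial module `Vₙ(M) = M[x]/M[x](xⁿ)` is `σ̄`-semicommutative as a right
`Vₙ(R) = R[x]/(xⁿ)`-module. -/
theorem Vn_sigma_semicomm {R M : Type*} [Ring R] [AddCommGroup M] [Module Rᵐᵒᵖ M]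
    (σ : R →+* R) (n : ℕ) (hn : 2 ≤ n)
    (hrigid : ∀ (m : M) (a : R), op (σ a) • (op a • m) = 0 → op a • m = 0)
    (hsc : ∀ (m : M) (a : R), op a • m = 0 → ∀ r : R, op (σ a) • (op r • m) = 0) :
    ∀ (U : ℕ → M) (A : ℕ → R),
      (∀ k < n, ∑ ij ∈ antidiagonal k, op (A ij.2) • U ij.1 = 0) →
      ∀ (B : ℕ → R), ∀ k < n,
        ∑ ij ∈ antidiagonal k,
          op (σ (A ij.2)) • (∑ pq ∈ antidiagonal ij.1, op (B pq.2) • U pq.1) = 0 := by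
  intro U A hUA
  -- Key lemma: all "coefficient products" vanish: for i + j < n, U i • A j = 0.
  have key : ∀ m k t, k + t = m → t ≤ k → k < n → op (A t) • U (k - t) = 0 := by
    intro m
    induction m using Nat.strong_induction_on with
    | _ m ih =>
      intro k t hm htk hkn
      -- The partial sum over terms with second index ≥ t is still zero.
      have hstep : ∑ ij ∈ (antidiagonal k).filter (fun ij => t ≤ ij.2),
          op (A ij.2) • U ij.1 = 0 := by
        rw [Finset.sum_subset (Finset.filter_subset _ _)]
        · exact hUA k hkn
        · intro x hx hxs
          have hx2 : x.2 < t := by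
            by_contra h
            exact hxs (Finset.mem_filter.mpr ⟨hx, le_of_not_gt h⟩)
          have hxk : x.1 + x.2 = k := Finset.HasAntidiagonal.mem_antidiagonal.mp hx
          have hx1 : x.1 = k - x.2 := by omega
          rw [hx1]
          exact ih (k + x.2) (by omega) k x.2 rfl (by omega) hkn
      have h2 : ∑ ij ∈ (antidiagonal k).filter (fun ij => t ≤ ij.2),
          op (σ (A t)) • (op (A ij.2) • U ij.1) = 0 := by
        rw [← Finset.smul_sum, hstep, smul_zero]
      have hmem : (k - t, t) ∈ (antidiagonal k).filter (fun ij => t ≤ ij.2) :=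
        Finset.mem_filter.mpr ⟨Finset.HasAntidiagonal.mem_antidiagonal.mpr (by omega), le_refl t⟩
      have h3 := Finset.sum_eq_single_of_mem (f := fun ij : ℕ × ℕ =>
          op (σ (A t)) • (op (A ij.2) • U ij.1)) (k - t, t) hmem ?_
      · rw [h3] at h2
        exact hrigid _ _ h2
      · intro x hx hne
        obtain ⟨hxa, hxt⟩ := Finset.mem_filter.mp hx
        have hxk : x.1 + x.2 = k := Finset.HasAntidiagonal.mem_antidiagonal.mp hxa
        have hx2 : t < x.2 := by
          rcases lt_or_eq_of_le hxt with h | h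
          · exact h
          · exfalso
            apply hne
            have : x.1 = k - t := by omega
            exact Prod.ext this h.symm
        have hz := ih (x.1 + t + t) (by omega) (x.1 + t) t rfl (by omega) (by omega)
        simp only [Nat.add_sub_cancel] at hz
        exact hsc (U x.1) (A t) hz (A x.2)
  intro B k hk
  refine Finset.sum_eq_zero fun ij hij => ?_
  rw [Finset.smul_sum]
  refine Finset.sum_eq_zero fun pq hpq => ?_
  have h1 : ij.1 + ij.2 = k := Finset.HasAntidiagonal.mem_antidiagonal.mp hij
  have h2 : pq.1 + pq.2 = ij.1 := Finset.HasAntidiagonal.mem_antidiagonal.mp hpq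
  have hz := key (pq.1 + ij.2 + ij.2) (pq.1 + ij.2) ij.2 rfl (by omega) (by omega)
  simp only [Nat.add_sub_cancel] at hz
  exact hsc (U pq.1) (A ij.2) hz (B pq.2)
end

section
/- Let n ≥ 2 and M a σ-rigid, σ-semicommutative right R-module. If U = (m₀,…,m_{n−1}) ∈ V_n(M) and A = (a₀,…,a_{n−1}) ∈ V_n(R) satisfy U·A = 0, then m_i·a_j = 0 for all i, j with i + j ≤ n − 1. -/
open MulOpposite Finset

/-! Induct on `i + j`, and for fixed `k = i + j` on `j`. In the convolution identity
`∑_{i' + j' = k} mᵢ' aⱼ' = 0`, multiply the relation by `σ(aⱼ)`: each term with `j' < j` is already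
zero, and each term with `j' > j` becomes zero because `mᵢ' aⱼ = 0` (as `i' + j < k`) and
σ-semicommutativity gives `mᵢ' aⱼ' σ(aⱼ) = 0`. What is left is `mᵢ aⱼ σ(aⱼ) = 0`, and σ-rigidity
yields `mᵢ aⱼ = 0`. -/

section

variable {R M : Type*} [Ring R] [AddCommGroup M] [Module Rᵐᵒᵖ M] {σ : R →+* R}

theorem smul_eq_zero_of_smul_add_sum_eq_zero
    (hrigid : ∀ (m : M) (a : R), op (σ a) • (op a • m) = 0 → op a • m = 0)
    (hsc : ∀ (m : M) (a : R), op a • m = 0 → ∀ r : R, op (σ a) • (op r • m) = 0)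
    {ι : Type*} {s : Finset ι} {a : R} {m : M} {b : ι → R} {x : ι → M}
    (h : op a • m + ∑ i ∈ s, op (b i) • x i = 0)
    (hx : ∀ i ∈ s, op a • x i = 0 ∨ op (b i) • x i = 0) :
    op a • m = 0 := by
  apply hrigid
  have hterm : ∀ i ∈ s, op (σ a) • (op (b i) • x i) = 0 := fun i hi =>
    (hx i hi).elim (fun hax => hsc _ _ hax (b i)) (fun hbx => by rw [hbx, smul_zero])
  simpa only [smul_add, smul_sum, sum_eq_zero hterm, add_zero, smul_zero] using
    congrArg (op (σ a) • ·) h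

theorem smul_eq_zero_of_antidiagonal_sum_eq_zero
    (hrigid : ∀ (m : M) (a : R), op (σ a) • (op a • m) = 0 → op a • m = 0)
    (hsc : ∀ (m : M) (a : R), op a • m = 0 → ∀ r : R, op (σ a) • (op r • m) = 0)
    {n : ℕ} {U : ℕ → M} {A : ℕ → R}
    (hUA : ∀ k < n, ∑ ij ∈ antidiagonal k, op (A ij.2) • U ij.1 = 0) (i j : ℕ) (hij : i + j < n) :
    op (A j) • U i = 0 := by
  have hmem : (i, j) ∈ antidiagonal (i + j) := HasAntidiagonal.mem_antidiagonal.2 rfl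
  refine smul_eq_zero_of_smul_add_sum_eq_zero hrigid hsc
    (s := (antidiagonal (i + j)).erase (i, j)) (b := fun ij => A ij.2) (x := fun ij => U ij.1)
    ?_ ?_
  · exact (add_sum_erase _ _ hmem).trans (hUA _ hij)
  · rintro ⟨i', j'⟩ hp
    obtain ⟨hne, hsum⟩ : (i', j') ≠ (i, j) ∧ i' + j' = i + j := by
      simpa only [mem_erase, HasAntidiagonal.mem_antidiagonal] using hp
    have hj : j' ≠ j := fun h => hne (Prod.ext (by omega) h)
    rcases hj.lt_or_gt with hlt | hgt
    · exact .inr (smul_eq_zero_of_antidiagonal_sum_eq_zero hrigid hsc hUA i' j' (by omega))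
    · exact .inl (smul_eq_zero_of_antidiagonal_sum_eq_zero hrigid hsc hUA i' j (by omega))
termination_by (i + j, j)
decreasing_by
  · exact Prod.Lex.right' _ (by omega) hlt
  · exact Prod.Lex.left _ _ (by omega)

end

/-- Let `M` be a `σ`-rigid and `σ`-semicommutative right `R`-module. If
`U = (m₀,…,m_{n-1}) ∈ Vₙ(M)` and `A = (a₀,…,a_{n-1}) ∈ Vₙ(R)` satisfy `U·A = 0`,
then `mᵢ·aⱼ = 0` for all `i, j` with `i + j ≤ n - 1`. -/
theorem components_vanish_of_UA_eq_zero {R M : Type*} [Ring R] [AddCommGroup M]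
    [Module Rᵐᵒᵖ M] (σ : R →+* R) (n : ℕ) (hn : 2 ≤ n)
    (hrigid : ∀ (m : M) (a : R), op (σ a) • (op a • m) = 0 → op a • m = 0)
    (hsc : ∀ (m : M) (a : R), op a • m = 0 → ∀ r : R, op (σ a) • (op r • m) = 0)
    (U : ℕ → M) (A : ℕ → R)
    (hUA : ∀ k < n, ∑ ij ∈ antidiagonal k, op (A ij.2) • U ij.1 = 0) :
    ∀ i j : ℕ, i + j ≤ n - 1 → op (A j) • U i = 0 :=
  fun i j hij => smul_eq_zero_of_antidiagonal_sum_eq_zero hrigid hsc hUA i j (by omega)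
end

section
/- Let n ≥ 2 and M a σ-reduced right R-module (σ-compatible, σ-rigid, and σ-semicommutative). If U ∈ V_n(M), A ∈ V_n(R) satisfy U·A·σ̄(A) = 0, and α_k denotes the k-th component of U·A, then α_i·σ(a_j) = 0 for all i, j with i + j ≤ n − 1. -/
open MulOpposite Finset

/-!
Writing `m·a` for `op a • m`, we show `αᵢ·σ(aⱼ) = 0` by induction on `i + j`, and for fixed
`i + j = k` by induction on `j`. Multiply the `k`-th equation `∑ αᵢ'·σ(aⱼ') = 0` on the right by
`σ(aⱼ)`. The terms with `j' < j` vanish because `αᵢ'·σ(aⱼ') = 0` already; those with `j' > j`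
have `i' < i`, so `αᵢ'·σ(aⱼ) = 0` and semicommutativity gives `αᵢ'·σ(aⱼ')·σ(aⱼ) = 0`. What is
left is `αᵢ·σ(aⱼ)·σ(aⱼ) = 0`; compatibility turns `m·b·b = 0` into `m·b·σ(b) = 0`, and
rigidity then gives `m·b = 0`.
-/

section SigmaReduced

variable {R M : Type*} [Ring R] [AddCommGroup M] [Module Rᵐᵒᵖ M] {σ : R →+* R}
  (hcompat : ∀ (m : M) (a : R), op a • m = 0 ↔ op (σ a) • m = 0)
include hcompat

theorem smul_eq_zero_of_smul_smul_self_eq_zero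
    (hrigid : ∀ (m : M) (a : R), op (σ a) • (op a • m) = 0 → op a • m = 0)
    {m : M} {b : R} (h : op b • op b • m = 0) : op b • m = 0 :=
  hrigid m b ((hcompat _ b).mp h)

theorem smul_sigma_smul_eq_zero_of_smul_sigma_eq_zero
    (hsc : ∀ (m : M) (a : R), op a • m = 0 → ∀ r : R, op (σ a) • (op r • m) = 0)
    {m : M} {a : R} (h : op (σ a) • m = 0) (r : R) : op (σ a) • op r • m = 0 :=
  hsc m a ((hcompat m a).mpr h) r

variable (hrigid : ∀ (m : M) (a : R), op (σ a) • (op a • m) = 0 → op a • m = 0)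
  (hsc : ∀ (m : M) (a : R), op a • m = 0 → ∀ r : R, op (σ a) • (op r • m) = 0)
include hrigid hsc

theorem smul_sigma_eq_zero_of_sum_antidiagonal {A : ℕ → R} {α : ℕ → M} {i j : ℕ}
    (hsum : ∑ ij ∈ antidiagonal (i + j), op (σ (A ij.2)) • α ij.1 = 0)
    (hleft : ∀ i' j', i' + j' = i + j → j' < j → op (σ (A j')) • α i' = 0)
    (hbelow : ∀ i' < i, op (σ (A j)) • α i' = 0) :
    op (σ (A j)) • α i = 0 := by
  have hterm : ∀ ij ∈ antidiagonal (i + j), ij ≠ (i, j) →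
      op (σ (A j)) • op (σ (A ij.2)) • α ij.1 = 0 := by
    rintro ⟨i', j'⟩ hmem hne
    simp only [HasAntidiagonal.mem_antidiagonal] at hmem
    rcases lt_trichotomy j' j with hlt | rfl | hgt
    · rw [hleft i' j' hmem hlt, smul_zero]
    · exact absurd (by rw [Nat.add_right_cancel hmem]) hne
    · exact smul_sigma_smul_eq_zero_of_smul_sigma_eq_zero hcompat hsc
        (hbelow i' (by omega)) _
  have hsquare : op (σ (A j)) • op (σ (A j)) • α i = 0 := by
    rw [← sum_eq_single_of_mem (i, j) (by simp) hterm, ← smul_sum, hsum, smul_zero]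
  exact smul_eq_zero_of_smul_smul_self_eq_zero hcompat hrigid hsquare

end SigmaReduced

theorem alpha_sigma_vanish_general {R M : Type*} [Ring R] [AddCommGroup M]
    [Module Rᵐᵒᵖ M] (σ : R →+* R) (n : ℕ) (hn : 2 ≤ n)
    (hcompat : ∀ (m : M) (a : R), op a • m = 0 ↔ op (σ a) • m = 0)
    (hrigid : ∀ (m : M) (a : R), op (σ a) • (op a • m) = 0 → op a • m = 0)
    (hsc : ∀ (m : M) (a : R), op a • m = 0 → ∀ r : R, op (σ a) • (op r • m) = 0)
    (A : ℕ → R)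
    (α : ℕ → M)
    (hUAA : ∀ k < n, ∑ ij ∈ antidiagonal k, op (σ (A ij.2)) • α ij.1 = 0) :
    ∀ i j : ℕ, i + j ≤ n - 1 → op (σ (A j)) • α i = 0 := by
  suffices h : ∀ k < n, ∀ i j, i + j = k → op (σ (A j)) • α i = 0 from
    fun i j hij => h (i + j) (by omega) i j rfl
  intro k
  induction k using Nat.strong_induction_on with | _ k ihk =>
  intro hk i j
  induction j using Nat.strong_induction_on generalizing i with | _ j ihj =>
  rintro rfl
  refine smul_sigma_eq_zero_of_sum_antidiagonal hcompat hrigid hsc (hUAA _ hk) ?_ ?_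
  · exact fun i' j' hsum hlt => ihj j' hlt i' hsum
  · exact fun i' hlt => ihk (i' + j) (by omega) (by omega) i' j rfl

/-- Let `M` be a `σ`-reduced right `R`-module (i.e. `σ`-compatible, `σ`-rigid and
`σ`-semicommutative). If `U ∈ Vₙ(M)` and `A ∈ Vₙ(R)` satisfy `U·A·σ̄(A) = 0`, and `αₖ`
denotes the `k`-th component of `U·A`, then `αᵢ·σ(aⱼ) = 0` for all `i + j ≤ n - 1`. -/
theorem alpha_sigma_vanish {R M : Type*} [Ring R] [AddCommGroup M]
    [Module Rᵐᵒᵖ M] (σ : R →+* R) (n : ℕ) (hn : 2 ≤ n)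
    (hcompat : ∀ (m : M) (a : R), op a • m = 0 ↔ op (σ a) • m = 0)
    (hrigid : ∀ (m : M) (a : R), op (σ a) • (op a • m) = 0 → op a • m = 0)
    (hsc : ∀ (m : M) (a : R), op a • m = 0 → ∀ r : R, op (σ a) • (op r • m) = 0)
    (U : ℕ → M) (A : ℕ → R)
    (α : ℕ → M)
    (hα : ∀ k, α k = ∑ ij ∈ antidiagonal k, op (A ij.2) • U ij.1)
    (hUAA : ∀ k < n, ∑ ij ∈ antidiagonal k, op (σ (A ij.2)) • α ij.1 = 0) :
    ∀ i j : ℕ, i + j ≤ n - 1 → op (σ (A j)) • α i = 0 :=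
  alpha_sigma_vanish_general σ n hn hcompat hrigid hsc A α hUAA
end

section
/- Let S be a multiplicatively closed set of central regular elements of R with σ(s) = s for all s ∈ S, and extend σ to S⁻¹R by σ(a/s) = σ(a)/s. A right R-module M is σ-rigid if and only if the localization S⁻¹M is σ-rigid as a right S⁻¹R-module. -/
open MulOpposite

/-- Let `S` be a multiplicatively closed set of central regular elements of `R` with
`σ(s) = s` for all `s ∈ S`. Describing the localizations `S⁻¹R` (as `R'` with `φ : R → R'`)
and `S⁻¹M` (as `M'` with `ψ : M → M'`), with `σ` extended to `σ'` on `S⁻¹R` by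
`σ'(a/s) = σ(a)/s`: the right `R`-module `M` is `σ`-rigid if and only if `S⁻¹M` is
`σ'`-rigid as a right `S⁻¹R`-module. -/
theorem sigma_rigid_iff_localization {R M R' M' : Type*} [Ring R] [AddCommGroup M]
    [Module Rᵐᵒᵖ M] [Ring R'] [AddCommGroup M'] [Module R'ᵐᵒᵖ M']
    (σ : R →+* R) (σ' : R' →+* R') (S : Submonoid R)
    -- `S` consists of central elements
    (hScentral : ∀ s ∈ S, ∀ r : R, s * r = r * s)
    -- `S` consists of regular elements (non-zero-divisors on `R` and on `M`)
    (hSregR : ∀ s ∈ S, ∀ a : R, s * a = 0 → a = 0)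
    (hSregR' : ∀ s ∈ S, ∀ a : R, a * s = 0 → a = 0)
    (hSregM : ∀ s ∈ S, ∀ m : M, op s • m = 0 → m = 0)
    -- `σ` fixes `S`
    (hσS : ∀ s ∈ S, σ s = s)
    -- `φ : R → S⁻¹R` and `ψ : M → S⁻¹M` are the localization maps
    (φ : R →+* R') (ψ : M →+ M')
    (hψsmul : ∀ (m : M) (a : R), ψ (op a • m) = op (φ a) • ψ m)
    (hφker : ∀ a : R, φ a = 0 ↔ ∃ s ∈ S, s * a = 0)
    (hψker : ∀ m : M, ψ m = 0 ↔ ∃ s ∈ S, op s • m = 0)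
    (hφunit : ∀ s ∈ S, IsUnit (φ s))
    (hφcentral : ∀ s ∈ S, ∀ r' : R', φ s * r' = r' * φ s)
    (hR'frac : ∀ r' : R', ∃ a : R, ∃ s ∈ S, r' * φ s = φ a)
    (hM'frac : ∀ x : M', ∃ m : M, ∃ s ∈ S, op (φ s) • x = ψ m)
    -- `σ'` extends `σ` and fixes the images of elements of `S`
    (hσ'φ : ∀ a : R, σ' (φ a) = φ (σ a)) :
    (∀ (m : M) (a : R), op (σ a) • (op a • m) = 0 → op a • m = 0) ↔
      (∀ (x : M') (u : R'), op (σ' u) • (op u • x) = 0 → op u • x = 0) := by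
  have key : ∀ (y : M') (b c : R'), op b • (op c • y) = op (c * b) • y := by
    intro y b c
    rw [smul_smul, ← op_mul]
  constructor
  · -- M rigid → M' rigid
    intro h x u hu
    obtain ⟨a, t, htS, hta⟩ := hR'frac u
    obtain ⟨m, s, hsS, hsm⟩ := hM'frac x
    obtain ⟨c, hc⟩ : ∃ c : R', c = φ t * φ s := ⟨_, rfl⟩
    have hcomm : ∀ r' : R', c * r' = r' * c := by
      intro r'
      rw [hc, mul_assoc, hφcentral s hsS, ← mul_assoc, hφcentral t htS, mul_assoc]
    have h1 : ψ (op a • m) = op (u * c) • x := by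
      rw [hψsmul, ← hsm, key, ← hta]
      rw [hφcentral s hsS, mul_assoc, ← hc]
    have h2 : φ (σ a) = σ' u * φ t := by
      rw [← hσ'φ, ← hta, map_mul, hσ'φ, hσS t htS]
    have hz : op (u * σ' u) • x = 0 := by
      rw [← key]; exact hu
    have hrearr : u * c * (σ' u * φ t) = (u * σ' u) * (c * φ t) := by
      rw [← mul_assoc, mul_assoc u c, hcomm (σ' u), ← mul_assoc, mul_assoc]
    have h3 : ψ (op (σ a) • (op a • m)) = 0 := by
      rw [hψsmul, h1, h2, key, hrearr, ← key, hz, smul_zero]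
    have h4 : op (σ a) • (op a • m) = 0 := by
      obtain ⟨s', hs'S, hs'⟩ := (hψker _).mp h3
      exact hSregM s' hs'S _ hs'
    have h5 : op a • m = 0 := h m a h4
    have h6 : op (u * c) • x = 0 := by
      rw [← h1, h5, map_zero]
    -- cancel the unit c
    have hcu : IsUnit c := hc ▸ (hφunit t htS).mul (hφunit s hsS)
    obtain ⟨cu, hcueq⟩ := hcu
    have hstep : op c • (op u • x) = 0 := by rw [key, h6]
    have hthis : op u • x = op (↑cu⁻¹ : R') • (op c • (op u • x)) := by
      rw [key, key, ← hcueq, Units.mul_inv, mul_one]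
    rw [hthis, hstep, smul_zero]
  · -- M' rigid → M rigid
    intro h m a hma
    have h0 : op (σ' (φ a)) • (op (φ a) • ψ m) = 0 := by
      rw [hσ'φ, ← hψsmul, ← hψsmul, hma, map_zero]
    have h1 : op (φ a) • ψ m = 0 := h (ψ m) (φ a) h0
    rw [← hψsmul] at h1
    obtain ⟨s, hsS, hs⟩ := (hψker _).mp h1
    exact hSregM s hsS _ hs
end

section
/- Let M be a right R-module and σ an automorphism of R extended to R[x] and R[x,x⁻¹]. Then M[x] is σ-rigid as a right R[x]-module if and only if M[x,x⁻¹] is σ-rigid as a right R[x,x⁻¹]-module. -/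
open MulOpposite

section Aux

variable {R M : Type*} [Ring R] [AddCommGroup M] [Module Rᵐᵒᵖ M]

/-- The `k`-th coefficient of the convolution product `m · f`. -/
def Sconv {ι : Type*} [Add ι] [DecidableEq ι] (m : ι →₀ M) (f : ι →₀ R) (k : ι) : M :=
  m.sum fun i mi => f.sum fun j aj => if i + j = k then op aj • mi else 0

/-- The `k`-th coefficient of `m · f · σ(f)`. -/
def Tconv {ι : Type*} [Add ι] [DecidableEq ι] (σ : R →+* R)
    (m : ι →₀ M) (f : ι →₀ R) (k : ι) : M :=
  m.sum fun i mi => f.sum fun j aj => f.sum fun l al =>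
    if i + j + l = k then op (σ al) • (op aj • mi) else 0

variable {ι κ : Type*} [Add ι] [DecidableEq ι] [Add κ] [DecidableEq κ]

lemma Sconv_map (g h : ι → κ) (m : ι →₀ M) (f : ι →₀ R) (k : ι) (k' : κ)
    (hc : ∀ i j, (g i + h j = k') ↔ (i + j = k)) :
    Sconv (m.mapDomain g) (f.mapDomain h) k' = Sconv m f k := by
  unfold Sconv
  rw [Finsupp.sum_mapDomain_index]
  · refine Finsupp.sum_congr fun i _ => ?_
    rw [Finsupp.sum_mapDomain_index]
    · exact Finsupp.sum_congr fun j _ => if_congr (hc i j) rfl rfl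
    · intro j; simp
    · intro j a b; split <;> simp [add_smul]
  · intro i; simp
  · intro i a b
    rw [← Finsupp.sum_add]
    exact Finsupp.sum_congr fun j _ => by split <;> simp [smul_add]

lemma Tconv_map (σ : R →+* R) (g h : ι → κ) (m : ι →₀ M) (f : ι →₀ R) (k : ι) (k' : κ)
    (hc : ∀ i j l, (g i + h j + h l = k') ↔ (i + j + l = k)) :
    Tconv σ (m.mapDomain g) (f.mapDomain h) k' = Tconv σ m f k := by
  unfold Tconv
  rw [Finsupp.sum_mapDomain_index]
  · refine Finsupp.sum_congr fun i _ => ?_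
    rw [Finsupp.sum_mapDomain_index]
    · refine Finsupp.sum_congr fun j _ => ?_
      rw [Finsupp.sum_mapDomain_index]
      · exact Finsupp.sum_congr fun l _ => if_congr (hc i j l) rfl rfl
      · intro l; simp
      · intro l a b; split <;> simp [map_add, add_smul]
    · intro j; simp
    · intro j a b
      rw [← Finsupp.sum_add]
      exact Finsupp.sum_congr fun l _ => by split <;> simp [add_smul, smul_add]
  · intro i; simp
  · intro i a b
    rw [← Finsupp.sum_add]
    refine Finsupp.sum_congr fun j _ => ?_
    rw [← Finsupp.sum_add]
    exact Finsupp.sum_congr fun l _ => by split <;> simp [smul_add]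

lemma Sconv_cast_neg (m : ℕ →₀ M) (f : ℕ →₀ R) (k : ℤ) (hk : k < 0) :
    Sconv (m.mapDomain (Nat.cast)) (f.mapDomain (Nat.cast)) k = 0 := by
  unfold Sconv
  rw [Finsupp.sum]
  refine Finset.sum_eq_zero fun i hi => ?_
  rw [Finsupp.sum]
  refine Finset.sum_eq_zero fun j hj => ?_
  obtain ⟨i', -, rfl⟩ := Finset.mem_image.mp (Finsupp.mapDomain_support hi)
  obtain ⟨j', -, rfl⟩ := Finset.mem_image.mp (Finsupp.mapDomain_support hj)
  rw [if_neg]; omega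

lemma Tconv_cast_neg (σ : R →+* R) (m : ℕ →₀ M) (f : ℕ →₀ R) (k : ℤ) (hk : k < 0) :
    Tconv σ (m.mapDomain (Nat.cast)) (f.mapDomain (Nat.cast)) k = 0 := by
  unfold Tconv
  rw [Finsupp.sum]
  refine Finset.sum_eq_zero fun i hi => ?_
  rw [Finsupp.sum]
  refine Finset.sum_eq_zero fun j hj => ?_
  rw [Finsupp.sum]
  refine Finset.sum_eq_zero fun l hl => ?_
  obtain ⟨i', -, rfl⟩ := Finset.mem_image.mp (Finsupp.mapDomain_support hi)
  obtain ⟨j', -, rfl⟩ := Finset.mem_image.mp (Finsupp.mapDomain_support hj)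
  obtain ⟨l', -, rfl⟩ := Finset.mem_image.mp (Finsupp.mapDomain_support hl)
  rw [if_neg]; omega

lemma exists_pre {N : Type*} [AddCommMonoid N] (v : ℤ →₀ N) (hv : ∀ i ∈ v.support, 0 ≤ i) :
    ∃ w : ℕ →₀ N, w.mapDomain (Nat.cast) = v := by
  refine ⟨v.mapDomain Int.toNat, ?_⟩
  rw [← Finsupp.mapDomain_comp]
  calc Finsupp.mapDomain ((Nat.cast) ∘ Int.toNat) v
      = Finsupp.mapDomain id v :=
        Finsupp.mapDomain_congr fun i hi => by
          simp [Int.toNat_of_nonneg (hv i hi)]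
    _ = v := Finsupp.mapDomain_id

lemma exists_shift (s : Finset ℤ) : ∃ a : ℤ, ∀ i ∈ s, 0 ≤ i + a := by
  refine ⟨∑ i ∈ s, |i|, fun i hi => ?_⟩
  have h1 : |i| ≤ ∑ j ∈ s, |j| :=
    Finset.single_le_sum (f := fun j => |j|) (fun j _ => abs_nonneg j) hi
  have h2 : -i ≤ |i| := neg_le_abs i
  linarith

end Aux

/-- Let `σ` be an automorphism of `R`, extended coefficientwise to `R[x]` and `R[x,x⁻¹]`.
The polynomial module `M[x]` (finitely supported `ℕ`-indexed coefficients, with the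
convolution action of `R[x]`) is `σ`-rigid if and only if the Laurent polynomial module
`M[x,x⁻¹]` (finitely supported `ℤ`-indexed coefficients) is `σ`-rigid over `R[x,x⁻¹]`. -/
theorem poly_sigma_rigid_iff_laurent {R M : Type*} [Ring R] [AddCommGroup M]
    [Module Rᵐᵒᵖ M] (σ : R →+* R) (hσ : Function.Bijective σ) :
    (∀ (m : ℕ →₀ M) (f : ℕ →₀ R),
      (∀ k : ℕ, (m.sum fun i mi => f.sum fun j aj => f.sum fun l al =>
          if i + j + l = k then op (σ al) • (op aj • mi) else 0) = 0) →
      ∀ k : ℕ, (m.sum fun i mi => f.sum fun j aj =>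
          if i + j = k then op aj • mi else 0) = 0) ↔
    (∀ (m : ℤ →₀ M) (f : ℤ →₀ R),
      (∀ k : ℤ, (m.sum fun i mi => f.sum fun j aj => f.sum fun l al =>
          if i + j + l = k then op (σ al) • (op aj • mi) else 0) = 0) →
      ∀ k : ℤ, (m.sum fun i mi => f.sum fun j aj =>
          if i + j = k then op aj • mi else 0) = 0) := by
  constructor
  · -- poly rigid → laurent rigid
    intro hN m f hT k
    have hT' : ∀ k : ℤ, Tconv σ m f k = 0 := hT
    show Sconv m f k = 0
    obtain ⟨a, ha⟩ := exists_shift (m.support ∪ f.support)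
    set m₁ : ℤ →₀ M := m.mapDomain (· + a) with hm₁
    set f₁ : ℤ →₀ R := f.mapDomain (· + a) with hf₁
    obtain ⟨m₀, hm₀⟩ := exists_pre m₁ (fun i hi => by
      obtain ⟨i', hi', rfl⟩ := Finset.mem_image.mp (Finsupp.mapDomain_support hi)
      exact ha i' (Finset.mem_union_left _ hi'))
    obtain ⟨f₀, hf₀⟩ := exists_pre f₁ (fun i hi => by
      obtain ⟨i', hi', rfl⟩ := Finset.mem_image.mp (Finsupp.mapDomain_support hi)
      exact ha i' (Finset.mem_union_right _ hi'))
    have hT₀ : ∀ k : ℕ, Tconv σ m₀ f₀ k = 0 := by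
      intro k
      have e1 : Tconv σ (m₀.mapDomain (Nat.cast)) (f₀.mapDomain (Nat.cast)) (k : ℤ)
          = Tconv σ m₀ f₀ k :=
        Tconv_map σ _ _ _ _ _ _ (fun i j l => by push_cast; omega)
      have e2 : Tconv σ m₁ f₁ (k : ℤ) = Tconv σ m f ((k : ℤ) - 3 * a) :=
        Tconv_map σ _ _ _ _ _ _ (fun i j l => by omega)
      rw [← e1, hm₀, hf₀, e2, hT']
    have hS₀ : ∀ k : ℕ, Sconv m₀ f₀ k = 0 := hN m₀ f₀ hT₀
    have e3 : Sconv m₁ f₁ (k + 2 * a) = Sconv m f k :=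
      Sconv_map _ _ _ _ _ _ (fun i j => by omega)
    rw [← e3, ← hm₀, ← hf₀]
    rcases lt_or_ge (k + 2 * a) 0 with h | h
    · exact Sconv_cast_neg _ _ _ h
    · obtain ⟨n, hn⟩ : ∃ n : ℕ, (n : ℤ) = k + 2 * a := ⟨(k + 2 * a).toNat, Int.toNat_of_nonneg h⟩
      rw [← hn]
      rw [Sconv_map _ _ _ _ n _ (fun i j => by push_cast; omega)]
      exact hS₀ n
  · -- laurent rigid → poly rigid
    intro hZ m f hT k
    have hT' : ∀ k : ℕ, Tconv σ m f k = 0 := hT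
    show Sconv m f k = 0
    have hTZ : ∀ k : ℤ, Tconv σ (m.mapDomain (Nat.cast)) (f.mapDomain (Nat.cast)) k = 0 := by
      intro k
      rcases lt_or_ge k 0 with h | h
      · exact Tconv_cast_neg σ _ _ _ h
      · obtain ⟨n, rfl⟩ : ∃ n : ℕ, (n : ℤ) = k := ⟨k.toNat, Int.toNat_of_nonneg h⟩
        rw [Tconv_map σ _ _ _ _ n _ (fun i j l => by push_cast; omega)]
        exact hT' n
    have hSZ := hZ (m.mapDomain (Nat.cast)) (f.mapDomain (Nat.cast)) hTZ (k : ℤ)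
    have : Sconv (m.mapDomain (Nat.cast)) (f.mapDomain (Nat.cast)) (k : ℤ) = Sconv m f k :=
      Sconv_map _ _ _ _ _ _ (fun i j => by push_cast; omega)
    rw [← this]
    exact hSZ
end

section
/- Let σ be an endomorphism of R and M a right R-module. If the skew polynomial module M[x;σ] is rigid as a right R[x;σ]-module, then M is σ-rigid as a right R-module. -/
open MulOpposite

/-- If the skew polynomial module `M[x;σ]` (finitely supported coefficient sequences with
the twisted convolution action `(Σ mᵢxⁱ)·(Σ aⱼxʲ) = Σₖ (Σ_{i+j=k} mᵢ·σⁱ(aⱼ)) xᵏ` of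
`R[x;σ]`) is rigid as a right `R[x;σ]`-module, then `M` is `σ`-rigid. -/
theorem sigma_rigid_of_skew_poly_rigid {R M : Type*} [Ring R] [AddCommGroup M]
    [Module Rᵐᵒᵖ M] (σ : R →+* R)
    (hrigid : ∀ (m : ℕ →₀ M) (f : ℕ →₀ R),
      (∀ k : ℕ, (m.sum fun i mi => f.sum fun j aj => f.sum fun l al =>
          if i + j + l = k then op ((⇑σ)^[i + j] al) • (op ((⇑σ)^[i] aj) • mi) else 0) = 0) →
      ∀ k : ℕ, (m.sum fun i mi => f.sum fun j aj =>
          if i + j = k then op ((⇑σ)^[i] aj) • mi else 0) = 0) :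
    ∀ (m : M) (a : R), op (σ a) • (op a • m) = 0 → op a • m = 0 := by
  intro m a h
  have key := hrigid (Finsupp.single 0 m) (Finsupp.single 1 a) ?_ 1
  · rw [Finsupp.sum_single_index (by simp), Finsupp.sum_single_index (by simp)] at key
    simpa using key
  · intro k
    rw [Finsupp.sum_single_index (by simp), Finsupp.sum_single_index (by simp),
      Finsupp.sum_single_index (by simp)]
    split
    · simpa using h
    · rfl
end

section
/- Let R be the ring of 2×2 matrices [[a,b],[0,a]] with a,b ∈ ℤ, and let σ be the endomorphism sending [[a,b],[0,a]] to [[a,−b],[0,a]]. Then R as a right R-module is σ-semicommutative. -/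
/-- The ring `R = {[[a,b],[0,a]] : a, b ∈ ℤ}` of upper triangular 2×2 integer matrices
with constant diagonal, as a subring of `M₂(ℤ)`. -/
def constDiagUT : Subring (Matrix (Fin 2) (Fin 2) ℤ) where
  carrier := {A | A 0 0 = A 1 1 ∧ A 1 0 = 0}
  zero_mem' := by constructor <;> simp
  one_mem' := by constructor <;> simp
  add_mem' := by
    rintro A B ⟨hA1, hA2⟩ ⟨hB1, hB2⟩
    constructor <;> simp_all
  neg_mem' := by
    rintro A ⟨hA1, hA2⟩
    constructor <;> simp_all
  mul_mem' := by
    rintro A B ⟨hA1, hA2⟩ ⟨hB1, hB2⟩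
    constructor <;> simp_all [Matrix.mul_apply, Fin.sum_univ_two]

/-- The endomorphism of `constDiagUT` sending `[[a,b],[0,a]]` to `[[a,-b],[0,a]]`. -/
def sigmaUT : constDiagUT →+* constDiagUT where
  toFun A := ⟨!![A.1 0 0, -(A.1 0 1); 0, A.1 1 1], by
    constructor <;> simp [A.2.1]⟩
  map_one' := by
    apply Subtype.ext
    ext i j
    fin_cases i <;> fin_cases j <;> simp
  map_mul' A B := by
    apply Subtype.ext
    ext i j
    fin_cases i <;> fin_cases j <;>
      simp [Matrix.mul_apply, Fin.sum_univ_two, A.2.1, A.2.2, B.2.1, B.2.2] <;> ring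
  map_zero' := by
    apply Subtype.ext
    ext i j
    fin_cases i <;> fin_cases j <;> simp
  map_add' A B := by
    apply Subtype.ext
    ext i j
    fin_cases i <;> fin_cases j <;> simp <;> ring

/-- The ring `R = {[[a,b],[0,a]] : a,b ∈ ℤ}` with the endomorphism
`σ([[a,b],[0,a]]) = [[a,-b],[0,a]]` is `σ`-semicommutative as a right module over itself:
`m·a = 0` implies `m·r·σ(a) = 0` for all `r`. -/
theorem constDiagUT_sigma_semicommutative :
    ∀ m a : constDiagUT, m * a = 0 → ∀ r : constDiagUT, m * r * sigmaUT a = 0 := by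
  rintro ⟨m, hm1, hm2⟩ ⟨a, ha1, ha2⟩ h r
  obtain ⟨r, hr1, hr2⟩ := r
  have hMA : m * a = 0 := congrArg Subtype.val h
  have hxc : m 0 0 * a 0 0 = 0 := by
    have := congrFun (congrFun hMA 0) 0
    simpa [Matrix.mul_apply, Fin.sum_univ_two, ha2] using this
  have hsum : m 0 0 * a 0 1 + m 0 1 * a 0 0 = 0 := by
    have := congrFun (congrFun hMA 0) 1
    simpa [Matrix.mul_apply, Fin.sum_univ_two, ← ha1] using this
  have hxd : m 0 0 * a 0 1 = 0 := by
    rcases mul_eq_zero.mp hxc with hx | hc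
    · simp [hx]
    · rw [hc, mul_zero, add_zero] at hsum; exact hsum
  have hyc : m 0 1 * a 0 0 = 0 := by linarith
  apply Subtype.ext
  show m * r * _ = 0
  ext i j
  fin_cases i <;> fin_cases j <;>
    simp [sigmaUT, Matrix.mul_apply, Fin.sum_univ_two, hm2, hr2, ha2, ← hm1, ← hr1, ← ha1] <;>
    first
    | linear_combination (r 0 1 * hxc) + (-(r 0 0) * hxd) + (r 0 0 * hyc)
    | (rcases mul_eq_zero.mp hxc with h' | h'
       exacts [Or.inl (Or.inl h'), Or.inr h'])
end
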